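/- arXiv:2208.07170 — 7 statements merged into one kernel-verified Lean document; each statement's English description precedes it below -/
import Mathlib

section
/- Let z₀, z₁, z₂ ∈ ℂ and a, b, c, a', b', c' ∈ ℝ. Define the wall function f(u,w) = (−Re u)·(Im w) − (−Re w)·(Im u) for u, w ∈ ℂ. Then f(−a·z₀ + b·z₁ − c·z₂, −a'·z₀ + b'·z₁ − c'·z₂) equals the determinant of the 3×3 real matrix with rows (f(z₂,z₁), f(z₂,z₀), f(z₁,z₀)), (a, b, c), (a', b', c'). -/
noncomputable section

/-- The wall function `f(u,w) = (−Re u)·(Im w) − (−Re w)·(Im u)` on central charges. -/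
def wallC (u w : ℂ) : ℝ := (-u.re) * w.im - (-w.re) * u.im

/-- determinant formula for the wall function of two 3-step complexes. -/
theorem stmt1 (z₀ z₁ z₂ : ℂ) (a b c a' b' c' : ℝ) :
    wallC (-(a : ℂ) * z₀ + (b : ℂ) * z₁ - (c : ℂ) * z₂)
        (-(a' : ℂ) * z₀ + (b' : ℂ) * z₁ - (c' : ℂ) * z₂) =
      (Matrix.det !![wallC z₂ z₁, wallC z₂ z₀, wallC z₁ z₀; a, b, c; a', b', c']) := by
  simp [wallC, Matrix.det_fin_three, Complex.add_re, Complex.sub_re, Complex.mul_re, Complex.mul_im]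
  ring
end
end

section
/- For all a, b, β ∈ ℝ and α > 0, the wall function between the line-bundle classes e_a and e_b satisfies the closed formula f_{β,α}(e_a, e_b) = (b − a)·[(a−β)²(b−β)² − (a−b)²·α² + 3α⁴] / 12. In particular, for a ≠ b the numerical λ-wall between O_{ℙ³}(a) and O_{ℙ³}(b) at s = 1/3 is the plane curve (a−β)²(b−β)² − (a−b)²·α² + 3α⁴ = 0. -/
noncomputable section

/-- First twisted Chern character `ch₁^β`. -/
def ch1 (β : ℝ) (v : Fin 4 → ℝ) : ℝ := v 1 - β * v 0

/-- Second twisted Chern character `ch₂^β`. -/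
def ch2 (β : ℝ) (v : Fin 4 → ℝ) : ℝ := v 2 - β * v 1 + (β ^ 2 / 2) * v 0

/-- Third twisted Chern character `ch₃^β`. -/
def ch3 (β : ℝ) (v : Fin 4 → ℝ) : ℝ :=
  v 3 - β * v 2 + (β ^ 2 / 2) * v 1 - (β ^ 3 / 6) * v 0

/-- Negative real part `τ_{β,α}` of the Bridgeland stability function at `s = 1/3`. -/
def tau (β α : ℝ) (v : Fin 4 → ℝ) : ℝ := -ch3 β v + (α ^ 2 / 2) * ch1 β v

/-- Imaginary part `ρ_{β,α}` of the Bridgeland stability function. -/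
def rho (β α : ℝ) (v : Fin 4 → ℝ) : ℝ := ch2 β v - (α ^ 2 / 2) * v 0

/-- The wall function `f_{β,α}(u,w) = τ(u)ρ(w) − τ(w)ρ(u)`. -/
def wall (β α : ℝ) (u w : Fin 4 → ℝ) : ℝ :=
  tau β α u * rho β α w - tau β α w * rho β α u

/-- The Chern character `e_t = (1, t, t²/2, t³/6)` of `O(t)`. -/
def eV (t : ℝ) : Fin 4 → ℝ := ![1, t, t ^ 2 / 2, t ^ 3 / 6]

theorem ch1_eV (β t : ℝ) : ch1 β (eV t) = t - β := by
  simp [ch1, eV]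

theorem ch2_eV (β t : ℝ) : ch2 β (eV t) = (t - β) ^ 2 / 2 := by
  simp only [ch2, eV, Matrix.cons_val, Matrix.cons_val_one, Matrix.cons_val_zero]
  ring

theorem ch3_eV (β t : ℝ) : ch3 β (eV t) = (t - β) ^ 3 / 6 := by
  simp only [ch3, eV, Matrix.cons_val, Matrix.cons_val_one, Matrix.cons_val_zero]
  ring

theorem tau_eV (β α t : ℝ) : tau β α (eV t) = -(t - β) ^ 3 / 6 + α ^ 2 / 2 * (t - β) := by
  rw [tau, ch1_eV, ch3_eV]
  ring

theorem rho_eV (β α t : ℝ) : rho β α (eV t) = (t - β) ^ 2 / 2 - α ^ 2 / 2 := by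
  rw [rho, ch2_eV]
  simp [eV]

theorem wall_eV_eV (β α a b : ℝ) :
    wall β α (eV a) (eV b) =
      (b - a) * ((a - β) ^ 2 * (b - β) ^ 2 - (a - b) ^ 2 * α ^ 2 + 3 * α ^ 4) / 12 := by
  rw [wall, tau_eV, tau_eV, rho_eV, rho_eV]
  ring

theorem stmt5_general (a b β α : ℝ) :
    wall β α (eV a) (eV b) =
      (b - a) * ((a - β) ^ 2 * (b - β) ^ 2 - (a - b) ^ 2 * α ^ 2 + 3 * α ^ 4) / 12 ∧
    (a ≠ b →
      (wall β α (eV a) (eV b) = 0 ↔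
        (a - β) ^ 2 * (b - β) ^ 2 - (a - b) ^ 2 * α ^ 2 + 3 * α ^ 4 = 0)) := by
  refine ⟨wall_eV_eV β α a b, fun hab => ?_⟩
  have hba : b - a ≠ 0 := sub_ne_zero.mpr hab.symm
  rw [wall_eV_eV, div_eq_zero_iff, mul_eq_zero]
  simp [hba]

/-- closed formula for the wall function between two line-bundle classes,
and the resulting equation of the numerical λ-wall between `O(a)` and `O(b)`. -/
theorem stmt5 (a b β α : ℝ) (hα : 0 < α) :
    wall β α (eV a) (eV b) =
      (b - a) * ((a - β) ^ 2 * (b - β) ^ 2 - (a - b) ^ 2 * α ^ 2 + 3 * α ^ 4) / 12 ∧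
    (a ≠ b →
      (wall β α (eV a) (eV b) = 0 ↔
        (a - β) ^ 2 * (b - β) ^ 2 - (a - b) ^ 2 * α ^ 2 + 3 * α ^ 4 = 0)) :=
  stmt5_general a b β α
end
end

section
/- At the point (β, α) = (0, 1/√3) one has f_{0,1/√3}(e_a, e_b) = 0 for all a, b ∈ {−1, 0, 1}; consequently, by bilinearity, f_{0,1/√3}(u, w) = 0 for all u, w in the real span of {e_{−1}, e_0, e_1}. Hence every numerical λ-wall between objects of the quiver heart ⟨O_{ℙ³}(−1)[2], O_{ℙ³}[1], O_{ℙ³}(1)⟩ passes through the point (0, 1/√3). -/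
noncomputable section

lemma tau_add (β α : ℝ) (u w : Fin 4 → ℝ) :
    tau β α (u + w) = tau β α u + tau β α w := by
  simp only [tau, ch3, ch1, Pi.add_apply]; ring

lemma tau_smul (β α c : ℝ) (u : Fin 4 → ℝ) :
    tau β α (c • u) = c * tau β α u := by
  simp only [tau, ch3, ch1, Pi.smul_apply, smul_eq_mul]; ring

lemma sq_alpha : (1 / Real.sqrt 3) ^ 2 = 1 / 3 := by
  rw [div_pow, Real.sq_sqrt (by norm_num : (3:ℝ) ≥ 0)]; norm_num

lemma tau_eV_s6 (a : ℝ) (ha : a ∈ ({-1, 0, 1} : Set ℝ)) :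
    tau 0 (1 / Real.sqrt 3) (eV a) = 0 := by
  rcases ha with h | h | h <;> subst h <;>
    simp [tau, ch3, ch1, eV, sq_alpha] <;> norm_num

lemma tau_span (u : Fin 4 → ℝ)
    (hu : u ∈ Submodule.span ℝ ({eV (-1), eV 0, eV 1} : Set (Fin 4 → ℝ))) :
    tau 0 (1 / Real.sqrt 3) u = 0 := by
  induction hu using Submodule.span_induction with
  | mem x hx =>
      rcases hx with h | h | h <;> subst h
      · exact tau_eV_s6 (-1) (by simp)
      · exact tau_eV_s6 0 (by simp)
      · exact tau_eV_s6 1 (by simp)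
  | zero => simp [tau, ch3, ch1]
  | add x y _ _ hx hy => rw [tau_add, hx, hy, add_zero]
  | smul c x _ hx => rw [tau_smul, hx, mul_zero]

/-- at `(β,α) = (0, 1/√3)` the wall function vanishes on all pairs of
the classes `e_{−1}, e_0, e_1`, hence by bilinearity on their whole real span:
every numerical λ-wall of the quiver heart passes through `(0, 1/√3)`. -/
theorem stmt6 :
    (∀ a ∈ ({-1, 0, 1} : Set ℝ), ∀ b ∈ ({-1, 0, 1} : Set ℝ),
      wall 0 (1 / Real.sqrt 3) (eV a) (eV b) = 0) ∧
    (∀ u ∈ Submodule.span ℝ ({eV (-1), eV 0, eV 1} : Set (Fin 4 → ℝ)),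
      ∀ w ∈ Submodule.span ℝ ({eV (-1), eV 0, eV 1} : Set (Fin 4 → ℝ)),
        wall 0 (1 / Real.sqrt 3) u w = 0) := by
  constructor
  · intro a ha b hb
    unfold wall
    rw [tau_eV_s6 a ha, tau_eV_s6 b hb]; ring
  · intro u hu w hw
    unfold wall
    rw [tau_span u hu, tau_span w hw]; ring
end
end

section
/- Let c, k, f, g, h ∈ ℝ, and set v = −c·e_{−1} + (2c+k)·e_0 − c·e_1 and w = −f·e_{−1} + g·e_0 − h·e_1 in ℝ⁴. Then for all β ∈ ℝ and α > 0, f_{β,α}(v, w) = (h·(2c+k) − c·g)·(β³/3) + (h − f)·f_{β,α}(v, e_{−1}). (Wall-reduction identity: every wall function of a class of dimension vector [0,c,2c+k,c] against a class of dimension vector [0,f,g,h] is a combination of the monomial β³ and the wall function against O_{ℙ³}(−1)[2].) -/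
noncomputable section

/-- wall-reduction identity for classes of dimension vector
`[0,c,2c+k,c]` against `[0,f,g,h]`. -/
theorem stmt8 (c k f g h : ℝ) (β α : ℝ) (hα : 0 < α) :
    wall β α (-c • eV (-1) + (2 * c + k) • eV 0 - c • eV 1)
        (-f • eV (-1) + g • eV 0 - h • eV 1) =
      (h * (2 * c + k) - c * g) * (β ^ 3 / 3) +
        (h - f) * wall β α (-c • eV (-1) + (2 * c + k) • eV 0 - c • eV 1) (eV (-1)) := by
  simp only [wall, tau, rho, ch1, ch2, ch3, eV, Pi.add_apply, Pi.sub_apply, Pi.smul_apply, smul_eq_mul, Matrix.cons_val_zero, Matrix.cons_val_one, Matrix.head_cons, Matrix.cons_val_two, Matrix.tail_cons, Matrix.cons_val_three]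
  ring
end
end

section
/- Let c, k, f, g, h ∈ ℝ, v = −c·e_{−1} + (2c+k)·e_0 − c·e_1 and w = −f·e_{−1} + g·e_0 − h·e_1 in ℝ⁴. If (β, α) with β ≠ 0 and α > 0 satisfies both f_{β,α}(v, e_{−1}) = 0 and f_{β,α}(v, w) = 0, then h·(2c+k) = c·g, and consequently f_{β',α'}(v, w) = (h − f)·f_{β',α'}(v, e_{−1}) for all β' ∈ ℝ and α' > 0. Hence no numerical λ-wall for a class of dimension vector [0,c,2c+k,c] can cross the canonical wall against O_{ℙ³}(−1)[2] at a point with β ≠ 0 unless it coincides with it. -/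
noncomputable section

/-- Key algebraic identity: the difference of the two wall functions is
`β³/3 · (h(2c+k) − cg)`, independently of `α`. -/
lemma stmt9_key (c k f g h : ℝ) (β α : ℝ) :
    wall β α (-c • eV (-1) + (2 * c + k) • eV 0 - c • eV 1)
        (-f • eV (-1) + g • eV 0 - h • eV 1)
      = (h - f) * wall β α (-c • eV (-1) + (2 * c + k) • eV 0 - c • eV 1) (eV (-1))
        + β ^ 3 / 3 * (h * (2 * c + k) - c * g) := by
  simp only [wall, tau, rho, ch1, ch2, ch3, eV, Pi.add_apply, Pi.sub_apply, Pi.smul_apply,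
    smul_eq_mul, Matrix.cons_val_zero, Matrix.cons_val_one, Matrix.head_cons,
    Matrix.cons_val_two, Matrix.tail_cons, Matrix.cons_val_three]
  ring

/-- a numerical λ-wall for a class of dimension vector `[0,c,2c+k,c]`
meeting the canonical wall against `O(−1)[2]` at a point with `β ≠ 0` must
coincide with that canonical wall. -/
theorem stmt9 (c k f g h : ℝ) (β α : ℝ) (hβ : β ≠ 0) (hα : 0 < α)
    (h1 : wall β α (-c • eV (-1) + (2 * c + k) • eV 0 - c • eV 1) (eV (-1)) = 0)
    (h2 : wall β α (-c • eV (-1) + (2 * c + k) • eV 0 - c • eV 1)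
        (-f • eV (-1) + g • eV 0 - h • eV 1) = 0) :
    h * (2 * c + k) = c * g ∧
    ∀ β' α' : ℝ, 0 < α' →
      wall β' α' (-c • eV (-1) + (2 * c + k) • eV 0 - c • eV 1)
          (-f • eV (-1) + g • eV 0 - h • eV 1) =
        (h - f) * wall β' α' (-c • eV (-1) + (2 * c + k) • eV 0 - c • eV 1) (eV (-1)) := by
  have hD : h * (2 * c + k) - c * g = 0 := by
    have := stmt9_key c k f g h β α
    rw [h1, h2] at this
    have hβ3 : β ^ 3 ≠ 0 := pow_ne_zero _ hβ
    have h0 : β ^ 3 / 3 * (h * (2 * c + k) - c * g) = 0 := by linarith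
    rcases mul_eq_zero.1 h0 with h' | h'
    · exact absurd (by linarith : β ^ 3 = 0) hβ3
    · exact h'
  refine ⟨by linarith, fun β' α' _ => ?_⟩
  rw [stmt9_key c k f g h β' α', hD]
  ring
end
end

section
/- Let c > 0, k ≥ 0 and f, g, h ∈ ℝ, and set v = −c·e_{−1} + (2c+k)·e_0 − c·e_1 and w = −f·e_{−1} + g·e_0 − h·e_1 in ℝ⁴. If f_{β,α}(v, w) = 0 for all β ∈ ℝ and all α > 0, then (f, g, h) is a scalar multiple of (c, 2c+k, c); that is, a class of the quiver heart has identically vanishing wall function against the class of dimension vector [0,c,2c+k,c] only if its dimension vector is proportional to [0,c,2c+k,c]. -/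
noncomputable section

/-- a class of the quiver heart has identically vanishing wall
function against the class of dimension vector `[0,c,2c+k,c]` only if its
dimension vector `[0,f,g,h]` is proportional to `[0,c,2c+k,c]`. -/
theorem stmt10 (c k f g h : ℝ) (hc : 0 < c) (hk : 0 ≤ k)
    (hvan : ∀ β α : ℝ, 0 < α →
      wall β α (-c • eV (-1) + (2 * c + k) • eV 0 - c • eV 1)
        (-f • eV (-1) + g • eV 0 - h • eV 1) = 0) :
    ∃ t : ℝ, f = t * c ∧ g = t * (2 * c + k) ∧ h = t * c := by
  have h1 := hvan 0 1 one_pos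
  have h2 := hvan 1 1 one_pos
  simp only [wall, tau, rho, ch1, ch2, ch3, eV, Pi.add_apply, Pi.sub_apply, Pi.smul_apply,
    smul_eq_mul, Matrix.cons_val_zero, Matrix.cons_val_one, Matrix.head_cons,
    Matrix.cons_val_two, Matrix.cons_val_three, Matrix.tail_cons] at h1 h2
  have hpos : 0 < c + k / 2 := by linarith
  have hfh : (c + k / 2) * (f - h) = 0 := by linear_combination (3 : ℝ) * h1
  have hf : f = h := by
    rcases mul_eq_zero.mp hfh with h' | h'
    · linarith
    · linarith
  subst hf
  have hg : g * c = f * (2 * c + k) := by linear_combination (-3 : ℝ) * h2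
  refine ⟨f / c, ?_, ?_, ?_⟩
  · field_simp
  · field_simp
    linear_combination hg
  · field_simp
end
end

section
/- Let c, k, f, g, h ∈ ℝ with h ≥ f and h·(2c+k) ≥ c·g (the determinant condition for the truncation), and set v = −c·e_{−1} + (2c+k)·e_0 − c·e_1 and w = −f·e_{−1} + g·e_0 − h·e_1 in ℝ⁴. Then for every (β, α) with β < 0, α > 0 and f_{β,α}(v, e_{−1}) < 0 (i.e. outside the canonical wall against O_{ℙ³}(−1)[2]), one has f_{β,α}(v, w) ≤ 0, with equality if and only if h·(2c+k) = c·g and h = f. Hence, outside that wall and in the half-plane β < 0, no class w satisfying these conditions can destabilize a class of dimension vector [0,c,2c+k,c]. -/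
noncomputable section

/-- under the determinant conditions `h ≥ f` and `h(2c+k) ≥ cg`,
outside the canonical wall against `O(−1)[2]` and in the half-plane `β < 0`, the
wall function of `[0,c,2c+k,c]` against `[0,f,g,h]` is nonpositive, vanishing
exactly when `h(2c+k) = cg` and `h = f`: no such class destabilizes there. -/
theorem stmt11 (c k f g h : ℝ) (hhf : h ≥ f) (hdet : h * (2 * c + k) ≥ c * g) :
    ∀ β α : ℝ, β < 0 → 0 < α →
      wall β α (-c • eV (-1) + (2 * c + k) • eV 0 - c • eV 1) (eV (-1)) < 0 →
      (wall β α (-c • eV (-1) + (2 * c + k) • eV 0 - c • eV 1)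
          (-f • eV (-1) + g • eV 0 - h • eV 1) ≤ 0 ∧
        (wall β α (-c • eV (-1) + (2 * c + k) • eV 0 - c • eV 1)
            (-f • eV (-1) + g • eV 0 - h • eV 1) = 0 ↔
          h * (2 * c + k) = c * g ∧ h = f)) := by
  intro β α hβ hα hwall
  set D := wall β α (-c • eV (-1) + (2 * c + k) • eV 0 - c • eV 1) (eV (-1)) with hD
  have key : wall β α (-c • eV (-1) + (2 * c + k) • eV 0 - c • eV 1)
      (-f • eV (-1) + g • eV 0 - h • eV 1)
      = (h - f) * D + (β ^ 3 / 3) * (h * (2 * c + k) - c * g) := by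
    simp only [hD, wall, tau, rho, ch1, ch2, ch3, eV, Pi.add_apply, Pi.sub_apply,
      Pi.smul_apply, smul_eq_mul, Matrix.cons_val_zero, Matrix.cons_val_one,
      Matrix.head_cons, Matrix.cons_val_two, Matrix.tail_cons, Matrix.cons_val_three]
    ring
  have hb3 : β ^ 3 / 3 < 0 := by nlinarith [sq_nonneg β, mul_pos (mul_pos (neg_pos.2 hβ) (neg_pos.2 hβ)) (neg_pos.2 hβ)]
  have h1 : (h - f) * D ≤ 0 := mul_nonpos_of_nonneg_of_nonpos (by linarith) hwall.le
  have h2 : (β ^ 3 / 3) * (h * (2 * c + k) - c * g) ≤ 0 :=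
    mul_nonpos_of_nonpos_of_nonneg hb3.le (by linarith)
  constructor
  · rw [key]; linarith
  · rw [key]
    constructor
    · intro heq
      have e1 : (h - f) * D = 0 := by linarith
      have e2 : (β ^ 3 / 3) * (h * (2 * c + k) - c * g) = 0 := by linarith
      have hf : h - f = 0 := by
        rcases mul_eq_zero.1 e1 with h' | h'
        · exact h'
        · exact absurd h' hwall.ne
      have hA : h * (2 * c + k) - c * g = 0 := by
        rcases mul_eq_zero.1 e2 with h' | h'
        · exact absurd h' hb3.ne
        · exact h'
      exact ⟨by linarith, by linarith⟩
    · rintro ⟨hA, hf⟩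
      subst hf; rw [hA]; ring
end
end
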